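/- arXiv:2004.14742 — 3 statements merged into one kernel-verified Lean document; each statement's English description precedes it below -/
import Mathlib

section
/- Let Γ be a finite tree (a finite connected acyclic simple graph) with vertex set T, and let m : T → ℕ be a function such that deg(v) + m(v) ≥ 3 for every vertex v ∈ T. Then for every nonempty subset W ⊆ T, the number of edges of Γ having exactly one endpoint in W, plus the sum Σ_{v ∈ W} m(v), is at least 3. -/
/-!
Counting the darts that leave the vertices of `W` gives `∑_{v ∈ W} deg v = 2 e + b`, where `e`
is the number of edges with both ends in `W` and `b` the number of boundary edges. These `e`
edges form a forest on `W`, so `e ≤ |W| - 1`, and summing `deg v + m v ≥ 3` over `W` yields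
`b + ∑_{v ∈ W} m v ≥ 3 |W| - 2 e ≥ |W| + 2`.
-/

open Finset

namespace SimpleGraph

variable {V : Type*} {G : SimpleGraph V}

theorem IsAcyclic.card_edgeFinset_lt_card [Fintype V] [Nonempty V] [Fintype G.edgeSet]
    (hG : G.IsAcyclic) : #G.edgeFinset < Fintype.card V := by
  classical
  obtain ⟨F, hGF, -, hF⟩ := connected_top.exists_isTree_le_of_le_of_isAcyclic le_top hG
  have hcard := hF.card_edgeFinset
  have hmono : #G.edgeFinset ≤ #F.edgeFinset := card_le_card (edgeFinset_mono hGF)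
  omega

section DartCount

variable [Fintype V] [DecidableEq V] [DecidableRel G.Adj] (W : Finset V)

theorem sum_degree_eq_card_darts_fst_mem :
    ∑ v ∈ W, G.degree v = #{d : G.Dart | d.fst ∈ W} := by
  rw [card_eq_sum_card_fiberwise (f := fun d : G.Dart => d.fst) (t := W)
    (fun d hd => by simpa using hd)]
  refine sum_congr rfl fun v hv => ?_
  rw [← dart_fst_fiber_card_eq_degree, filter_filter]
  congr 1
  ext d
  simp only [mem_filter, mem_univ, true_and]
  exact (and_iff_right_of_imp fun h => h ▸ hv).symm

theorem card_darts_fst_mem_snd_mem :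
    #{d : G.Dart | d.fst ∈ W ∧ d.snd ∈ W} = 2 * #(G.induce (W : Set V)).edgeFinset := by
  rw [← dart_card_eq_twice_card_edges, ← card_univ]
  exact card_bij'
    (fun d hd => ⟨(⟨d.fst, (mem_filter.1 hd).2.1⟩, ⟨d.snd, (mem_filter.1 hd).2.2⟩), d.adj⟩)
    (fun d _ => ⟨(d.fst, d.snd), d.adj⟩) (by simp) (by simp) (by simp) (by simp)

theorem ncard_boundary_eq_card_darts :
    {e ∈ G.edgeSet | ∃ x y : V, e = s(x, y) ∧ x ∈ W ∧ y ∉ W}.ncard =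
      #{d : G.Dart | d.fst ∈ W ∧ d.snd ∉ W} := by
  rw [← Set.ncard_coe_finset]
  refine (Set.ncard_congr (fun d _ => d.edge) ?_ ?_ ?_).symm
  · intro d hd
    simp only [coe_filter, mem_univ, true_and] at hd
    exact ⟨d.edge_mem, d.fst, d.snd, rfl, hd⟩
  · intro d₁ d₂ hd₁ hd₂ h
    simp only [coe_filter, mem_univ, true_and] at hd₁ hd₂
    rcases (dart_edge_eq_iff d₁ d₂).1 h with h | rfl
    · exact h
    · exact absurd hd₂.1 hd₁.2
  · rintro e ⟨he, x, y, rfl, hx, hy⟩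
    exact ⟨⟨(x, y), he⟩, by simpa using ⟨hx, hy⟩, rfl⟩

theorem IsAcyclic.sum_degree_add_two_le (hG : G.IsAcyclic) (hW : W.Nonempty) :
    ∑ v ∈ W, G.degree v + 2 ≤ 2 * #W + #{d : G.Dart | d.fst ∈ W ∧ d.snd ∉ W} := by
  have : Nonempty (W : Set V) := hW.to_set.to_subtype
  have hforest := (hG.induce (W : Set V)).card_edgeFinset_lt_card
  rw [sum_degree_eq_card_darts_fst_mem,
    ← card_filter_add_card_filter_not (fun d : G.Dart => d.snd ∈ W), filter_filter, filter_filter,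
    card_darts_fst_mem_snd_mem]
  simp only [coe_sort_coe, Fintype.card_coe] at hforest
  omega

end DartCount

end SimpleGraph

/-- Let `Γ` be a finite tree with vertex set `T`, and let `m : T → ℕ` satisfy
`deg v + m v ≥ 3` for every vertex `v`. Then for every nonempty subset `W ⊆ T`, the
number of edges of `Γ` with exactly one endpoint in `W`, plus `∑_{v ∈ W} m v`, is at
least `3`. -/
theorem tree_external_edges_ge_three {T : Type*} [Fintype T]
    (G : SimpleGraph T) [DecidableRel G.Adj] (hG : G.IsTree)
    (m : T → ℕ) (hdeg : ∀ v : T, G.degree v + m v ≥ 3)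
    (W : Finset T) (hW : W.Nonempty) :
    {e ∈ G.edgeSet | ∃ x y : T, e = s(x, y) ∧ x ∈ W ∧ y ∉ W}.ncard
      + ∑ v ∈ W, m v ≥ 3 := by
  classical
  have hforest := hG.isAcyclic.sum_degree_add_two_le W hW
  have hstable : #W • 3 ≤ ∑ v ∈ W, (G.degree v + m v) :=
    card_nsmul_le_sum W _ 3 fun v _ => hdeg v
  rw [smul_eq_mul, sum_add_distrib] at hstable
  rw [SimpleGraph.ncard_boundary_eq_card_darts]
  have := hW.card_pos
  omega
end

section
/- Let R be a commutative ring and P ∈ R. Then the quotient ring R[X,Y]/(XY − P) is a free R-module with basis given by the images of the monomials {1} ∪ {X^i : i ≥ 1} ∪ {Y^j : j ≥ 1}. In particular, R[X,Y]/(XY − P) is flat as an R-module. -/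
/-!
Modulo `XY - P`, every monomial `X^i Y^j` equals `P^min(i,j)` times `X^(i-j)` or `Y^(j-i)`, so
the classes of the pure powers span. They are independent because the `R`-linear "normal form"
map `X^i Y^j ↦ P^min(i,j) • e_(i-j)` into `ℤ →₀ R` sends `XY·f` to `P •` (normal form of `f`),
hence kills the ideal `(XY - P)`, and it sends each pure power to the corresponding `e_n`.
Flatness follows from freeness.
-/

open MvPolynomial

theorem pow_mul_pow_eq_pow_min_mul {A : Type*} [CommMonoid A] {x y c : A} (h : x * y = c)
    (i j : ℕ) : x ^ i * y ^ j = c ^ min i j * (x ^ (i - j) * y ^ (j - i)) := by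
  have hx : x ^ i = x ^ min i j * x ^ (i - j) := by rw [← pow_add]; congr 1; omega
  have hy : y ^ j = y ^ min i j * y ^ (j - i) := by rw [← pow_add]; congr 1; omega
  rw [hx, hy, ← h, mul_pow, mul_mul_mul_comm]

noncomputable section

namespace XYSubC

variable {R : Type*} [CommRing R] (P : R)

abbrev ideal : Ideal (MvPolynomial (Fin 2) R) :=
  Ideal.span {(X 0 : MvPolynomial (Fin 2) R) * X 1 - C P}

variable (R) in
def signedMonomial (n : ℤ) : MvPolynomial (Fin 2) R :=
  if 0 ≤ n then X 0 ^ n.toNat else X 1 ^ (-n).toNat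

theorem signedMonomial_eq (n : ℤ) :
    signedMonomial R n = X 0 ^ n.toNat * X 1 ^ (-n).toNat := by
  unfold signedMonomial
  split_ifs with h
  · rw [show (-n).toNat = 0 by omega, pow_zero, mul_one]
  · rw [show n.toNat = 0 by omega, pow_zero, one_mul]

theorem mk_X_pow_mul_X_pow (i j : ℕ) :
    Ideal.Quotient.mk (ideal P) ((X 0 : MvPolynomial (Fin 2) R) ^ i * X 1 ^ j) =
      P ^ min i j • Ideal.Quotient.mk (ideal P) (signedMonomial R ((i : ℤ) - j)) := by
  have hXY : Ideal.Quotient.mk (ideal P) (X 0) * Ideal.Quotient.mk (ideal P) (X 1) =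
      Ideal.Quotient.mk (ideal P) (C P) := by
    rw [← map_mul]
    exact Ideal.Quotient.eq.2 (Ideal.subset_span rfl)
  rw [signedMonomial_eq, show ((i : ℤ) - j).toNat = i - j by omega,
    show (-((i : ℤ) - j)).toNat = j - i by omega, ← Ideal.Quotient.mkₐ_eq_mk R, ← map_smul,
    smul_eq_C_mul, Ideal.Quotient.mkₐ_eq_mk, map_mul, map_pow, map_pow,
    pow_mul_pow_eq_pow_min_mul hXY]
  simp only [map_mul, map_pow]

def normalForm : MvPolynomial (Fin 2) R →ₗ[R] (ℤ →₀ R) :=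
  (basisMonomials (Fin 2) R).constr R fun d =>
    Finsupp.single ((d 0 : ℤ) - d 1) (P ^ min (d 0) (d 1))

theorem normalForm_monomial (d : Fin 2 →₀ ℕ) :
    normalForm P (monomial d 1) = Finsupp.single ((d 0 : ℤ) - d 1) (P ^ min (d 0) (d 1)) := by
  have := (basisMonomials (Fin 2) R).constr_basis R
    (fun d => Finsupp.single ((d 0 : ℤ) - d 1) (P ^ min (d 0) (d 1))) d
  rwa [coe_basisMonomials] at this

theorem monomial_one_eq_X_pow_mul_X_pow (d : Fin 2 →₀ ℕ) :
    (monomial d 1 : MvPolynomial (Fin 2) R) = X 0 ^ d 0 * X 1 ^ d 1 := by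
  rw [monomial_eq, C_1, one_mul, Finsupp.prod_fintype _ _ fun _ => pow_zero _, Fin.prod_univ_two]

theorem normalForm_X_pow_mul_X_pow (i j : ℕ) :
    normalForm P ((X 0 : MvPolynomial (Fin 2) R) ^ i * X 1 ^ j) =
      Finsupp.single ((i : ℤ) - j) (P ^ min i j) := by
  rw [X_pow_eq_monomial, X_pow_eq_monomial, monomial_mul, one_mul, normalForm_monomial]
  simp

theorem normalForm_signedMonomial (n : ℤ) :
    normalForm P (signedMonomial R n) = Finsupp.single n 1 := by
  rw [signedMonomial_eq, normalForm_X_pow_mul_X_pow, show min n.toNat (-n).toNat = 0 by omega,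
    pow_zero]
  congr 1
  omega

theorem normalForm_X_mul_X_mul (f : MvPolynomial (Fin 2) R) :
    normalForm P (X 0 * X 1 * f) = P • normalForm P f := by
  suffices normalForm P ∘ₗ LinearMap.mulLeft R (X 0 * X 1) = P • normalForm P from
    LinearMap.congr_fun this f
  refine (basisMonomials (Fin 2) R).ext fun d => ?_
  have hmul : (X 0 * X 1 * monomial d 1 : MvPolynomial (Fin 2) R) =
      monomial (Finsupp.single 0 1 + Finsupp.single 1 1 + d) 1 := by
    simp only [X, monomial_mul, one_mul]
  simp only [coe_basisMonomials, LinearMap.comp_apply, LinearMap.mulLeft_apply,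
    LinearMap.smul_apply, hmul, normalForm_monomial, Finsupp.smul_single, smul_eq_mul]
  congr 1
  · simp
  · simp
    ring

theorem normalForm_eq_zero_of_mem {f : MvPolynomial (Fin 2) R} (hf : f ∈ ideal P) :
    normalForm P f = 0 := by
  obtain ⟨c, rfl⟩ := Ideal.mem_span_singleton.mp hf
  rw [sub_mul, map_sub, normalForm_X_mul_X_mul, ← smul_eq_C_mul, map_smul, sub_self]

variable (R) in
def ofFinsupp : (ℤ →₀ R) →ₗ[R] MvPolynomial (Fin 2) R :=
  Finsupp.linearCombination R (signedMonomial R)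

theorem normalForm_ofFinsupp (v : ℤ →₀ R) : normalForm P (ofFinsupp R v) = v := by
  suffices normalForm P ∘ₗ ofFinsupp R = LinearMap.id from LinearMap.congr_fun this v
  refine Finsupp.lhom_ext' fun n => LinearMap.ext_ring ?_
  simp [ofFinsupp, normalForm_signedMonomial]

theorem mk_ofFinsupp_normalForm (f : MvPolynomial (Fin 2) R) :
    Ideal.Quotient.mk (ideal P) (ofFinsupp R (normalForm P f)) =
      Ideal.Quotient.mk (ideal P) f := by
  suffices (Ideal.Quotient.mkₐ R (ideal P)).toLinearMap ∘ₗ ofFinsupp R ∘ₗ normalForm P =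
      (Ideal.Quotient.mkₐ R (ideal P)).toLinearMap from LinearMap.congr_fun this f
  refine (basisMonomials (Fin 2) R).ext fun d => ?_
  simp only [coe_basisMonomials, LinearMap.comp_apply, AlgHom.toLinearMap_apply,
    Ideal.Quotient.mkₐ_eq_mk, normalForm_monomial, ofFinsupp, Finsupp.linearCombination_single,
    map_smul]
  rw [monomial_one_eq_X_pow_mul_X_pow, mk_X_pow_mul_X_pow]

def toQuotient : (ℤ →₀ R) →ₗ[R] MvPolynomial (Fin 2) R ⧸ ideal P :=
  (Ideal.Quotient.mkₐ R (ideal P)).toLinearMap ∘ₗ ofFinsupp R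

theorem toQuotient_apply (v : ℤ →₀ R) :
    toQuotient P v = Ideal.Quotient.mk (ideal P) (ofFinsupp R v) := rfl

theorem toQuotient_injective : Function.Injective (toQuotient P) := by
  refine (injective_iff_map_eq_zero _).2 fun v hv => ?_
  rw [toQuotient_apply, Ideal.Quotient.eq_zero_iff_mem] at hv
  rw [← normalForm_ofFinsupp P v, normalForm_eq_zero_of_mem P hv]

theorem toQuotient_surjective : Function.Surjective (toQuotient P) := by
  intro q
  obtain ⟨f, rfl⟩ := Ideal.Quotient.mk_surjective q
  exact ⟨normalForm P f, mk_ofFinsupp_normalForm P f⟩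

def basis : Module.Basis ℤ R (MvPolynomial (Fin 2) R ⧸ ideal P) :=
  .ofRepr (LinearEquiv.ofBijective (toQuotient P)
    ⟨toQuotient_injective P, toQuotient_surjective P⟩).symm

theorem basis_apply (n : ℤ) :
    basis P n = Ideal.Quotient.mk (ideal P) (signedMonomial R n) := by
  change toQuotient P (Finsupp.single n 1) = _
  rw [toQuotient_apply, ofFinsupp, Finsupp.linearCombination_single, one_smul]

end XYSubC

end

/-- For a commutative ring `R` and `P ∈ R`, the quotient `R[X,Y]/(XY - P)` is a free
`R`-module with basis the images of `{1} ∪ {X^i : i ≥ 1} ∪ {Y^j : j ≥ 1}` (indexed here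
by `ℤ`, with `n ≥ 0` corresponding to `X^n` and `n < 0` to `Y^{-n}`); in particular it is
flat over `R`. -/
theorem quotient_XY_sub_C_free_and_flat {R : Type*} [CommRing R] (P : R) :
    (∃ b : Module.Basis ℤ R
        (MvPolynomial (Fin 2) R ⧸
          Ideal.span {(X 0 : MvPolynomial (Fin 2) R) * X 1 - C P}),
      ∀ n : ℤ, b n = Ideal.Quotient.mk _
        (if 0 ≤ n then (X 0 : MvPolynomial (Fin 2) R) ^ n.toNat
          else (X 1 : MvPolynomial (Fin 2) R) ^ (-n).toNat)) ∧
    Module.Flat R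
      (MvPolynomial (Fin 2) R ⧸
        Ideal.span {(X 0 : MvPolynomial (Fin 2) R) * X 1 - C P}) := by
  have := Module.Free.of_basis (XYSubC.basis P)
  exact ⟨⟨XYSubC.basis P, XYSubC.basis_apply P⟩, Module.Flat.of_free⟩
end

section
/- Let q be a prime power, let V be a finite-dimensional vector space over the finite field 𝔽_q, let V' ⊆ V be a nonzero 𝔽_q-subspace, and let R be a commutative 𝔽_q-algebra. Suppose ρ' : V' ∖ {0} → R is a reciprocal map, i.e., ρ'(αv) = α^{-1}·ρ'(v) for all v ∈ V' ∖ {0} and α ∈ 𝔽_q^×, and ρ'(v)·ρ'(w) = ρ'(v+w)·(ρ'(v) + ρ'(w)) for all v, w ∈ V' ∖ {0} with v + w ≠ 0. Define the extension by zero i_*ρ' : V ∖ {0} → R by (i_*ρ')(v) = ρ'(v) if v ∈ V' and (i_*ρ')(v) = 0 otherwise. Then i_*ρ' is a reciprocal map on V ∖ {0}. -/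
/-- A map `ρ : V ∖ {0} → R` (given here as a map on all of `V`, with conditions imposed
only at nonzero vectors) is *reciprocal* if `ρ(αv) = α⁻¹·ρ(v)` for all `v ≠ 0` and
`α ∈ Fˣ`, and `ρ(v)·ρ(w) = ρ(v+w)·(ρ(v) + ρ(w))` for all `v, w ≠ 0` with `v + w ≠ 0`. -/
def IsReciprocal (F : Type*) [Field F] {V : Type*} [AddCommGroup V] [Module F V]
    {R : Type*} [CommRing R] [Algebra F R] (ρ : V → R) : Prop :=
  (∀ v : V, v ≠ 0 → ∀ α : Fˣ, ρ ((α : F) • v) = ((α⁻¹ : Fˣ) : F) • ρ v) ∧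
  (∀ v w : V, v ≠ 0 → w ≠ 0 → v + w ≠ 0 → ρ v * ρ w = ρ (v + w) * (ρ v + ρ w))

/-- Let `V'` be a nonzero subspace of a finite-dimensional `𝔽_q`-vector space `V`, and let
`ρ' : V' ∖ {0} → R` be a reciprocal map. Then the extension by zero `i_*ρ' : V ∖ {0} → R`,
equal to `ρ'` on `V'` and `0` outside `V'`, is again a reciprocal map. -/
theorem extension_by_zero_isReciprocal
    {F : Type*} [Field F] [Fintype F]
    {V : Type*} [AddCommGroup V] [Module F V] [FiniteDimensional F V]
    (V' : Submodule F V) (hV' : V' ≠ ⊥)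
    {R : Type*} [CommRing R] [Algebra F R]
    (ρ' : V' → R) (hρ' : IsReciprocal F ρ')
    (ρ : V → R)
    (hext : ∀ v : V', ρ (v : V) = ρ' v)
    (hzero : ∀ v : V, v ∉ V' → ρ v = 0) :
    IsReciprocal F ρ := by
  obtain ⟨h1, h2⟩ := hρ'
  constructor
  · intro v hv α
    by_cases hmem : v ∈ V'
    · have hsm : (α : F) • v ∈ V' := V'.smul_mem _ hmem
      rw [show ρ ((α : F) • v) = ρ' ((α : F) • ⟨v, hmem⟩) from hext ((α : F) • ⟨v, hmem⟩),
        show ρ v = ρ' ⟨v, hmem⟩ from hext ⟨v, hmem⟩, h1 ⟨v, hmem⟩ (by simpa using hv) α]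
    · have h1 : ρ v = 0 := hzero v hmem
      have h2 : ρ ((α : F) • v) = 0 := by
        apply hzero
        intro hc
        exact hmem (by simpa using V'.smul_mem ((α⁻¹ : Fˣ) : F) hc)
      rw [h1, h2, smul_zero]
  · intro v w hv hw hvw
    by_cases hmv : v ∈ V' <;> by_cases hmw : w ∈ V'
    · have hms : v + w ∈ V' := V'.add_mem hmv hmw
      rw [show ρ (v + w) = ρ' (⟨v, hmv⟩ + ⟨w, hmw⟩) from hext (⟨v, hmv⟩ + ⟨w, hmw⟩),
        show ρ v = ρ' ⟨v, hmv⟩ from hext ⟨v, hmv⟩,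
        show ρ w = ρ' ⟨w, hmw⟩ from hext ⟨w, hmw⟩,
        h2 ⟨v, hmv⟩ ⟨w, hmw⟩ (by simpa using hv) (by simpa using hw)
          (by simpa [← Subtype.coe_inj] using hvw)]
    · have hs : v + w ∉ V' := fun hc => hmw (by simpa using V'.sub_mem hc hmv)
      rw [hzero w hmw, hzero _ hs, mul_zero, zero_mul]
    · have hs : v + w ∉ V' := fun hc => hmv (by simpa using V'.sub_mem hc hmw)
      rw [hzero v hmv, hzero _ hs, zero_mul, zero_mul]
    · rw [hzero v hmv, hzero w hmw, zero_mul, add_zero, mul_zero]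
end
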